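/- Let (G, 𝒫, 𝒯) be an instance of Partitioned Vertex Cover and let H be the Popular Matching instance constructed from it. If M is a popular matching in H, then U := {i ∈ V(G) : {a_i, b_i} ∈ M} is a vertex cover of G. -/

import Mathlib

/-!
Suppose an edge `{i, j}` of `G` has neither `{a_i, b_i}` nor `{a_j, b_j}` in the popular
matching `M`. Rematching a set `X` of vertices changes the rank only of the vertices of `X` and
their partners, and popularity lets at most half of those improve. Applied to the edge
`{a_i, b_i}`, which both endpoints prefer, and to the path `a_i b_i u^e_i u^e_j`, this forces
`{a_i, d_i}, {b_i, c_i} ∈ M`, and then `{u^e_i, u^e_j} ∈ M`. But then rematching along the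
alternating path `d_i a_i c_i b_i u^e_i u^e_j b_j c_j a_j d_j` improves six of its ten vertices.
-/

open SimpleGraph

universe u

/-- A matching: a set of edges of `G` that are pairwise vertex-disjoint. -/
def IsMatching {W : Type u} (G : SimpleGraph W) (M : Set (Sym2 W)) : Prop :=
  M ⊆ G.edgeSet ∧ ∀ e ∈ M, ∀ e' ∈ M, e ≠ e' → ∀ v : W, v ∈ e → v ∉ e'

/-- `v` is matched by `M`. -/
def Matched {W : Type u} (M : Set (Sym2 W)) (v : W) : Prop := ∃ w : W, s(v, w) ∈ M

open scoped Classical in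
/-- `rank G pref M v = pref v (M(v))`, with the convention `|N(v)|+1` if `v` is unmatched. -/
noncomputable def rank {W : Type u} (G : SimpleGraph W) (pref : W → W → ℕ)
    (M : Set (Sym2 W)) (v : W) : ℕ :=
  if h : ∃ w : W, s(v, w) ∈ M then pref v h.choose else (G.neighborSet v).ncard + 1

/-- The number of vertices preferring `M` over `M'`. -/
noncomputable def vote {W : Type u} (G : SimpleGraph W) (pref : W → W → ℕ)
    (M M' : Set (Sym2 W)) : ℕ :=
  {v : W | rank G pref M v < rank G pref M' v}.ncard

/-- A popular matching: no other matching is more popular. -/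
def IsPopular {W : Type u} (G : SimpleGraph W) (pref : W → W → ℕ) (M : Set (Sym2 W)) : Prop :=
  IsMatching G M ∧
    ∀ M' : Set (Sym2 W), IsMatching G M' → vote G pref M' M ≤ vote G pref M M'

/-- Each vertex has a strict preference list: `pref v` is a bijection from the
neighborhood of `v` onto `{1, …, |N(v)|}`. -/
def HasPref {W : Type u} (G : SimpleGraph W) (pref : W → W → ℕ) : Prop :=
  ∀ v : W, Set.BijOn (pref v) (G.neighborSet v) (Set.Icc 1 (G.neighborSet v).ncard)

/-- The edge `e ∉ M` is labeled `+2` by `label_M` (given rank function `rk`):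
both endpoints prefer each other over their status in `M`. -/
def EdgePlus {W : Type u} (pref : W → W → ℕ) (rk : W → ℕ) (e : Sym2 W) : Prop :=
  ∃ x y : W, e = s(x, y) ∧ pref x y < rk x ∧ pref y x < rk y

/-- The edge `e ∉ M` is labeled `-2` by `label_M` (given rank function `rk`):
both endpoints prefer their status in `M` over each other. -/
def EdgeMinus {W : Type u} (pref : W → W → ℕ) (rk : W → ℕ) (e : Sym2 W) : Prop :=
  ∃ x y : W, e = s(x, y) ∧ rk x < pref x y ∧ rk y < pref y x

/-- The graph `G_M`: the spanning subgraph of `G` consisting of the edges of `M`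
together with the edges not labeled `-2`. -/
def GMgraph {W : Type u} (G : SimpleGraph W) (pref : W → W → ℕ) (M : Set (Sym2 W)) :
    SimpleGraph W where
  Adj x y := G.Adj x y ∧ (s(x, y) ∈ M ∨ ¬ EdgeMinus pref (rank G pref M) s(x, y))
  symm := by
    constructor
    intro x y h
    refine ⟨h.1.symm, ?_⟩
    rw [Sym2.eq_swap]
    exact h.2
  loopless := ⟨fun x h => G.ne_of_adj h.1 rfl⟩

/-- Consecutive edges alternate between `M` and non-`M`. -/
def altRel {W : Type u} (M : Set (Sym2 W)) (e e' : Sym2 W) : Prop := e ∈ M ↔ e' ∉ M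

/-- An alternating path (with respect to `M`) in a graph `G'`. -/
def IsAltPath {W : Type u} (M : Set (Sym2 W)) {G' : SimpleGraph W} {x y : W}
    (p : G'.Walk x y) : Prop :=
  p.IsPath ∧ List.Chain' (altRel M) p.edges ∧
    (∀ e, p.edges.head? = some e → e ∉ M → ¬ Matched M x) ∧
    (∀ e, p.edges.getLast? = some e → e ∉ M → ¬ Matched M y)

/-- An alternating cycle (with respect to `M`) in a graph `G'`:
the edges alternate cyclically between `M` and non-`M`. -/
def IsAltCycle {W : Type u} (M : Set (Sym2 W)) {G' : SimpleGraph W} {x : W}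
    (p : G'.Walk x x) : Prop :=
  p.IsCycle ∧ List.Chain' (altRel M) (p.edges ++ p.edges.take 1)

/-- `l` contains at least one edge labeled `+2`. -/
def OnePlusEdge {W : Type u} (pref : W → W → ℕ) (rk : W → ℕ) (l : List (Sym2 W)) : Prop :=
  ∃ e ∈ l, EdgePlus pref rk e

/-- `l` contains at least two edges labeled `+2`. -/
def TwoPlusEdges {W : Type u} (pref : W → W → ℕ) (rk : W → ℕ) (l : List (Sym2 W)) : Prop :=
  ∃ e ∈ l, ∃ e' ∈ l, e ≠ e' ∧ EdgePlus pref rk e ∧ EdgePlus pref rk e'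

/-- A vertex cover. -/
def IsVC {V : Type u} (G : SimpleGraph V) (U : Set V) : Prop :=
  ∀ ⦃x y : V⦄, G.Adj x y → x ∈ U ∨ y ∈ U
/-- An instance of Partitioned Vertex Cover: `G` is a finite simple graph, `P` is a
collection of pairwise disjoint edges of `G`, `T` is a collection of pairwise disjoint
3-element vertex sets each inducing a triangle in `G`, and every vertex of `G` lies in
exactly one member of `P ∪ T`. -/
def IsPVC {V : Type u} (G : SimpleGraph V) (P : Set (Sym2 V)) (T : Set (Finset V)) : Prop :=
  Finite V ∧
  P ⊆ G.edgeSet ∧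
  (∀ e ∈ P, ∀ e' ∈ P, e ≠ e' → ∀ v : V, v ∈ e → v ∉ e') ∧
  (∀ t ∈ T, t.card = 3) ∧
  (∀ t ∈ T, ∀ x ∈ t, ∀ y ∈ t, x ≠ y → G.Adj x y) ∧
  (∀ t ∈ T, ∀ t' ∈ T, t ≠ t' → ∀ v : V, v ∈ t → v ∉ t') ∧
  (∀ v : V, (∃ e ∈ P, v ∈ e) ∨ (∃ t ∈ T, v ∈ t)) ∧
  (∀ v : V, ¬ ((∃ e ∈ P, v ∈ e) ∧ (∃ t ∈ T, v ∈ t)))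

/-- A solution of a Partitioned Vertex Cover instance: a vertex cover `U` with
`|U ∩ P| = 1` for every pair `P` and `|U ∩ T| = 2` for every triple `T`. -/
def IsPVCSolution {V : Type u} (G : SimpleGraph V) (P : Set (Sym2 V)) (T : Set (Finset V))
    (U : Set V) : Prop :=
  IsVC G U ∧
  (∀ e ∈ P, {x : V | x ∈ e ∧ x ∈ U}.ncard = 1) ∧
  (∀ t ∈ T, {x : V | x ∈ t ∧ x ∈ U}.ncard = 2)

/-- The vertices of the graph `H` built from a Partitioned Vertex Cover instance:
`a i`, `b i`, `c i`, `d i` for a vertex `i` of `G`; `u i j` is the vertex `u^e_i` for the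
edge `e = {i,j}` of `G`; `f i j` is the vertex `f_{ij}` for the pair `{i,j} ∈ P`. -/
inductive Gad (V : Type u) : Type u where
  | a : V → Gad V
  | b : V → Gad V
  | c : V → Gad V
  | d : V → Gad V
  | u : V → V → Gad V
  | f : V → V → Gad V
deriving DecidableEq

/-- Which formal gadget vertices are really vertices of `H`. -/
def Gad.valid {V : Type u} (G : SimpleGraph V) (P : Set (Sym2 V)) : Gad V → Prop
  | .u i j => G.Adj i j
  | .f i j => s(i, j) ∈ P
  | _ => True

/-- The edges of `H`, up to symmetry. -/
inductive HBase {V : Type u} (G : SimpleGraph V) (P : Set (Sym2 V)) (T : Set (Finset V)) :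
    Gad V → Gad V → Prop where
  | da (i : V) : HBase G P T (.d i) (.a i)
  | ab (i : V) : HBase G P T (.a i) (.b i)
  | ac (i : V) : HBase G P T (.a i) (.c i)
  | bc (i : V) : HBase G P T (.b i) (.c i)
  | uu {i j : V} (h : G.Adj i j) : HBase G P T (.u i j) (.u j i)
  | bu {i j : V} (h : G.Adj i j) : HBase G P T (.b i) (.u i j)
  | df {i j : V} (h : s(i, j) ∈ P) : HBase G P T (.d i) (.f i j)
  | fc {i j : V} (h : s(i, j) ∈ P) : HBase G P T (.f i j) (.c j)
  | cd {i j : V} (h : s(i, j) ∈ P) : HBase G P T (.c i) (.d j)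
  | dd {i j : V} {t : Finset V} (ht : t ∈ T) (hi : i ∈ t) (hj : j ∈ t) (hne : i ≠ j) :
      HBase G P T (.d i) (.d j)
  | cc {i j : V} {t : Finset V} (ht : t ∈ T) (hi : i ∈ t) (hj : j ∈ t) (hne : i ≠ j) :
      HBase G P T (.c i) (.c j)

/-- The graph `H` of the Popular Matching instance built from `(G, P, T)`. -/
def Hgraph {V : Type u} (G : SimpleGraph V) (P : Set (Sym2 V)) (T : Set (Finset V)) :
    SimpleGraph {g : Gad V // Gad.valid G P g} where
  Adj x y := x ≠ y ∧ (HBase G P T x.1 y.1 ∨ HBase G P T y.1 x.1)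
  symm := ⟨fun _ _ h => ⟨h.1.symm, h.2.symm⟩⟩
  loopless := ⟨fun _ h => h.1 rfl⟩

/-- The Popular Matching instance (graph together with preference lists) constructed
from a Partitioned Vertex Cover instance `(G, P, T)`.  The field `pref` gives the
preference lists; all its values on the neighborhoods in `H` are pinned down, except
the ranks that `b i` assigns to the vertices `u^e_i`, which form an arbitrary fixed
bijection onto `{2, …, deg_G(i) + 1}`. -/
structure Reduction (V : Type u) [LinearOrder V] : Type u where
  G : SimpleGraph V
  P : Set (Sym2 V)
  T : Set (Finset V)
  ispvc : IsPVC G P T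
  pref : Gad V → Gad V → ℕ
  pref_ab : ∀ i : V, pref (.a i) (.b i) = 1
  pref_ac : ∀ i : V, pref (.a i) (.c i) = 2
  pref_ad : ∀ i : V, pref (.a i) (.d i) = 3
  pref_ba : ∀ i : V, pref (.b i) (.a i) = 1
  pref_bu : ∀ i : V, Set.BijOn (pref (.b i)) {g : Gad V | ∃ j : V, G.Adj i j ∧ g = .u i j}
      (Set.Icc 2 ((G.neighborSet i).ncard + 1))
  pref_bc : ∀ i : V, pref (.b i) (.c i) = (G.neighborSet i).ncard + 2
  pref_ca : ∀ i : V, pref (.c i) (.a i) = 1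
  pref_cb : ∀ i : V, pref (.c i) (.b i) = 2
  pref_da : ∀ i : V, pref (.d i) (.a i) = 1
  pref_uu : ∀ i j : V, G.Adj i j → pref (.u i j) (.u j i) = 1
  pref_ub : ∀ i j : V, G.Adj i j → pref (.u i j) (.b i) = 2
  pref_cf : ∀ i j : V, s(i, j) ∈ P → pref (.c i) (.f j i) = 3
  pref_cd : ∀ i j : V, s(i, j) ∈ P → pref (.c i) (.d j) = 4
  pref_dc : ∀ i j : V, s(i, j) ∈ P → pref (.d i) (.c j) = 2
  pref_df : ∀ i j : V, s(i, j) ∈ P → pref (.d i) (.f i j) = 3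
  pref_fd : ∀ i j : V, s(i, j) ∈ P → pref (.f i j) (.d i) = 1
  pref_fc : ∀ i j : V, s(i, j) ∈ P → pref (.f i j) (.c j) = 2
  pref_tri : ∀ t ∈ T, ∀ i j k : V, t = {i, j, k} → i < j → j < k →
    pref (.c i) (.c k) = 3 ∧ pref (.c i) (.c j) = 4 ∧
    pref (.c j) (.c i) = 3 ∧ pref (.c j) (.c k) = 4 ∧
    pref (.c k) (.c j) = 3 ∧ pref (.c k) (.c i) = 4 ∧
    pref (.d i) (.d j) = 2 ∧ pref (.d i) (.d k) = 3 ∧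
    pref (.d j) (.d k) = 2 ∧ pref (.d j) (.d i) = 3 ∧
    pref (.d k) (.d i) = 2 ∧ pref (.d k) (.d j) = 3

namespace Reduction

variable {V : Type u} [LinearOrder V] (R : Reduction V)

/-- The vertex set of `H`. -/
abbrev HV : Type u := {g : Gad V // Gad.valid R.G R.P g}

/-- The graph `H`. -/
def H : SimpleGraph R.HV := Hgraph R.G R.P R.T

/-- The preference lists of `H`, as a function on its vertices. -/
def prefH : R.HV → R.HV → ℕ := fun x y => R.pref x.1 y.1

/-- The vertex `a_i` of `H`. -/
def va (i : V) : R.HV := ⟨.a i, trivial⟩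
/-- The vertex `b_i` of `H`. -/
def vb (i : V) : R.HV := ⟨.b i, trivial⟩
/-- The vertex `c_i` of `H`. -/
def vc (i : V) : R.HV := ⟨.c i, trivial⟩
/-- The vertex `d_i` of `H`. -/
def vd (i : V) : R.HV := ⟨.d i, trivial⟩
/-- The vertex `u^e_i` of `H`, for an edge `e = {i,j}` of `G`. -/
def vu (i j : V) (h : R.G.Adj i j) : R.HV := ⟨.u i j, h⟩
/-- The vertex `f_{ij}` of `H`, for a pair `{i,j} ∈ P`. -/
def vf (i j : V) (h : s(i, j) ∈ R.P) : R.HV := ⟨.f i j, h⟩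

/-- The matching `M*` in `H` constructed from a solution `U`. -/
def Mstar (U : Set V) : Set (Sym2 R.HV) :=
  {e : Sym2 R.HV |
    (∃ (i j : V) (h : R.G.Adj i j), e = s(R.vu i j h, R.vu j i h.symm)) ∨
    (∃ (x y : V) (h : s(x, y) ∈ R.P) (h' : s(y, x) ∈ R.P), x ∉ U ∧ y ∈ U ∧
      (e = s(R.va x, R.vd x) ∨ e = s(R.vb x, R.vc x) ∨ e = s(R.va y, R.vb y) ∨
       e = s(R.vf x y h, R.vc y) ∨ e = s(R.vf y x h', R.vd y))) ∨
    (∃ t ∈ R.T, ∃ x y z : V, t = {x, y, z} ∧ x ∉ U ∧ y ∈ U ∧ z ∈ U ∧ y ≠ z ∧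
      R.pref (.d x) (.d y) < R.pref (.d x) (.d z) ∧
      (e = s(R.va x, R.vd x) ∨ e = s(R.vb x, R.vc x) ∨ e = s(R.va y, R.vb y) ∨
       e = s(R.va z, R.vb z) ∨ e = s(R.vc y, R.vc z) ∨ e = s(R.vd y, R.vd z)))}

end Reduction

/-- The vertex set of the Pair Selector gadget associated with a pair `{i,j}`. -/
def pairGadget {V : Type u} (i j : V) : Set (Gad V) :=
  {g : Gad V | ∃ x : V, (x = i ∨ x = j) ∧ (g = .a x ∨ g = .b x ∨ g = .c x ∨ g = .d x)} ∪
    {Gad.f i j, Gad.f j i}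

/-- The vertex set of the Triple Selector gadget associated with a triple `t`. -/
def tripleGadget {V : Type u} (t : Finset V) : Set (Gad V) :=
  {g : Gad V | ∃ x ∈ t, g = .a x ∨ g = .b x ∨ g = .c x ∨ g = .d x}

section PopularMatching

variable {W : Type*} {G : SimpleGraph W} {pref : W → W → ℕ} {M A : Set (Sym2 W)} {X : Set W}

lemma IsMatching.adj (hM : IsMatching G M) {v w : W} (h : s(v, w) ∈ M) : G.Adj v w :=
  G.mem_edgeSet.mp (hM.1 h)

lemma IsMatching.eq_of_mem (hM : IsMatching G M) {v w w' : W} (h : s(v, w) ∈ M)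
    (h' : s(v, w') ∈ M) : w = w' := by
  by_contra hne
  refine hM.2 _ h _ h' ?_ v (Sym2.mem_mk_left _ _) (Sym2.mem_mk_left _ _)
  rw [Ne, Sym2.congr_right]
  exact hne

lemma IsMatching.eq_of_mem_swap (hM : IsMatching G M) {v w w' : W} (h : s(v, w) ∈ M)
    (h' : s(w', v) ∈ M) : w = w' :=
  hM.eq_of_mem h (Sym2.eq_swap ▸ h')

lemma IsMatching.exists_forall_partner_eq (hM : IsMatching G M) (v : W) :
    ∃ z, ∀ w, s(v, w) ∈ M → w = z := by
  by_cases hv : Matched M v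
  · obtain ⟨z, hz⟩ := hv
    exact ⟨z, fun w hw => hM.eq_of_mem hw hz⟩
  · exact ⟨v, fun w hw => (hv ⟨w, hw⟩).elim⟩

lemma IsMatching.insert (hM : IsMatching G M) {x y : W} (hxy : G.Adj x y)
    (hx : ∀ e ∈ M, x ∉ e) (hy : ∀ e ∈ M, y ∉ e) : IsMatching G (insert s(x, y) M) := by
  refine ⟨Set.insert_subset (G.mem_edgeSet.mpr hxy) hM.1, ?_⟩
  rintro e (rfl | he) e' (rfl | he') hne v hv hv'
  · exact hne rfl
  · rcases Sym2.mem_iff.mp hv with rfl | rfl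
    exacts [hx e' he' hv', hy e' he' hv']
  · rcases Sym2.mem_iff.mp hv' with rfl | rfl
    exacts [hx e he hv, hy e he hv]
  · exact hM.2 e he e' he' hne v hv hv'

lemma isMatching_singleton {x y : W} (h : G.Adj x y) : IsMatching G {s(x, y)} :=
  ⟨by simpa using h, by simp⟩

lemma IsMatching.rank_eq (hM : IsMatching G M) {v w : W} (h : s(v, w) ∈ M) :
    rank G pref M v = pref v w := by
  have hv : ∃ x, s(v, x) ∈ M := ⟨w, h⟩
  rw [rank, dif_pos hv, hM.eq_of_mem hv.choose_spec h]

lemma rank_of_not_matched {v : W} (h : ¬ Matched M v) :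
    rank G pref M v = (G.neighborSet v).ncard + 1 :=
  dif_neg h

lemma one_lt_rank [Finite W] (hM : IsMatching G M) {v w : W} (hvw : G.Adj v w)
    (h : ∀ x, s(v, x) ∈ M → 1 < pref v x) : 1 < rank G pref M v := by
  by_cases hv : Matched M v
  · obtain ⟨x, hx⟩ := hv
    rw [hM.rank_eq hx]
    exact h x hx
  · rw [rank_of_not_matched hv]
    have : 0 < (G.neighborSet v).ncard := (Set.ncard_pos (Set.toFinite _)).mpr ⟨w, hvw⟩
    omega

def replaceEdges (M : Set (Sym2 W)) (X : Set W) (A : Set (Sym2 W)) : Set (Sym2 W) :=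
  (M \ {e | ∃ v ∈ X, v ∈ e}) ∪ A

lemma IsMatching.replaceEdges (hM : IsMatching G M) (hA : IsMatching G A)
    (hAX : ∀ e ∈ A, ∀ v ∈ e, v ∈ X) : IsMatching G (replaceEdges M X A) := by
  refine ⟨Set.union_subset (Set.sdiff_subset.trans hM.1) hA.1, ?_⟩
  rintro e (⟨he, heX⟩ | heA) e' (⟨he', heX'⟩ | heA') hne v hv hv'
  · exact hM.2 e he e' he' hne v hv hv'
  · exact heX ⟨v, hAX e' heA' v hv', hv⟩
  · exact heX' ⟨v, hAX e heA v hv, hv'⟩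
  · exact hA.2 e heA e' heA' hne v hv hv'

lemma rank_replaceEdges_of_mem (hM : IsMatching G M) (hA : IsMatching G A)
    (hAX : ∀ e ∈ A, ∀ v ∈ e, v ∈ X) {v w : W} (h : s(v, w) ∈ A) :
    rank G pref (replaceEdges M X A) v = pref v w :=
  (hM.replaceEdges hA hAX).rank_eq (Or.inr h)

lemma rank_replaceEdges_of_not_mem (hM : IsMatching G M) (hA : IsMatching G A)
    (hAX : ∀ e ∈ A, ∀ v ∈ e, v ∈ X) {v : W} (hvX : v ∉ X)
    (hvM : ∀ w ∈ X, s(w, v) ∉ M) :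
    rank G pref (replaceEdges M X A) v = rank G pref M v := by
  have hiff : ∀ w, s(v, w) ∈ replaceEdges M X A ↔ s(v, w) ∈ M := by
    refine fun w => ⟨?_, fun h => Or.inl ⟨h, ?_⟩⟩
    · rintro (⟨h, -⟩ | h)
      · exact h
      · exact absurd (hAX _ h v (Sym2.mem_mk_left _ _)) hvX
    · rintro ⟨x, hx, hxe⟩
      rcases Sym2.mem_iff.mp hxe with rfl | rfl
      · exact hvX hx
      · exact hvM x hx (by rwa [Sym2.eq_swap])
  by_cases hv : Matched M v
  · obtain ⟨w, hw⟩ := hv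
    rw [hM.rank_eq hw, (hM.replaceEdges hA hAX).rank_eq ((hiff w).mpr hw)]
  · have hv' : ¬ Matched (replaceEdges M X A) v := fun ⟨w, hw⟩ => hv ⟨w, (hiff w).mp hw⟩
    rw [rank_of_not_matched hv, rank_of_not_matched hv']

lemma card_le_vote [Finite W] {M' : Set (Sym2 W)} (S : Finset W)
    (hS : ∀ v ∈ S, rank G pref M v < rank G pref M' v) : S.card ≤ vote G pref M M' := by
  rw [← Set.ncard_coe_finset]
  exact Set.ncard_le_ncard hS

/-- Only vertices of `Y` change rank, and popularity lets at most half of them improve. -/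
lemma IsPopular.two_mul_vote_replaceEdges_le [Finite W] (hpop : IsPopular G pref M)
    (hA : IsMatching G A) (hAX : ∀ e ∈ A, ∀ v ∈ e, v ∈ X) {Y : Finset W} (hXY : X ⊆ Y)
    (hY : ∀ w ∈ X, ∀ v, s(w, v) ∈ M → v ∈ Y) :
    2 * vote G pref (replaceEdges M X A) M ≤ Y.card := by
  set M' := replaceEdges M X A
  have hchanged : ∀ v, rank G pref M' v ≠ rank G pref M v → v ∈ (Y : Set W) := by
    intro v hv
    by_contra hvY
    exact hv (rank_replaceEdges_of_not_mem hpop.1 hA hAX (fun h => hvY (hXY h))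
      fun w hw h => hvY (hY w hw v h))
  have hdisj : Disjoint {v | rank G pref M' v < rank G pref M v}
      {v | rank G pref M v < rank G pref M' v} :=
    Set.disjoint_left.mpr fun v (h : rank G pref M' v < _) h' => lt_asymm h h'
  calc 2 * vote G pref M' M ≤ vote G pref M' M + vote G pref M M' := by
        have := hpop.2 M' (hpop.1.replaceEdges hA hAX)
        omega
    _ = ({v | rank G pref M' v < rank G pref M v} ∪
          {v | rank G pref M v < rank G pref M' v}).ncard := (Set.ncard_union_eq hdisj).symm
    _ ≤ (Y : Set W).ncard := Set.ncard_le_ncard <| Set.union_subset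
          (fun v hv => hchanged v hv.ne) (fun v hv => hchanged v hv.ne')
    _ = Y.card := Set.ncard_coe_finset Y

/-- Otherwise adding `{x, y}` wins two votes and loses at most that of the partner of `y`. -/
lemma IsPopular.matched_of_lt_rank [Finite W] (hpop : IsPopular G pref M) {x y : W}
    (hxy : G.Adj x y) (hx : pref x y < rank G pref M x) (hy : pref y x < rank G pref M y) :
    Matched M x := by
  classical
  by_contra hxM
  obtain ⟨z, hz⟩ := hpop.1.exists_forall_partner_eq y
  have hA := isMatching_singleton hxy
  have hAX : ∀ e ∈ ({s(x, y)} : Set (Sym2 W)), ∀ v ∈ e, v ∈ ({x, y} : Set W) := by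
    simp
  have hwin : 2 ≤ vote G pref (replaceEdges M {x, y} {s(x, y)}) M := by
    refine (card_le_vote {x, y} ?_).trans' (Finset.card_pair hxy.ne).ge
    simp only [Finset.mem_insert, Finset.mem_singleton, forall_eq_or_imp, forall_eq]
    rw [rank_replaceEdges_of_mem hpop.1 hA hAX rfl,
      rank_replaceEdges_of_mem hpop.1 hA hAX Sym2.eq_swap]
    exact ⟨hx, hy⟩
  have := hpop.two_mul_vote_replaceEdges_le hA hAX (Y := {x, y, z})
    (by simp [Set.insert_subset_iff])
    (by
      simp only [Set.mem_insert_iff, Set.mem_singleton_iff, forall_eq_or_imp, forall_eq]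
      exact ⟨fun v hv => (hxM ⟨v, hv⟩).elim, fun v hv => by simp [hz v hv]⟩)
  have := Finset.card_le_three (a := x) (b := y) (c := z)
  omega

/-- Along an `M`-alternating path `x - y = z - w` whose two outer edges are both preferred
by their endpoints, rematching gives four winners against at most the two partners of `x`
and `w`. -/
lemma IsPopular.false_of_lt_rank_of_lt_rank [Finite W] (hpop : IsPopular G pref M)
    {x y z w : W} (hxy : G.Adj x y) (hzw : G.Adj z w) (hyz : s(y, z) ∈ M) (hxw : x ≠ w)
    (hx : pref x y < rank G pref M x) (hy : pref y x < rank G pref M y)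
    (hz : pref z w < rank G pref M z) (hw : pref w z < rank G pref M w) : False := by
  classical
  have hM := hpop.1
  have hxz : x ≠ z := by
    rintro rfl
    rw [hM.rank_eq (Sym2.eq_swap ▸ hyz)] at hx
    exact hx.false
  have hyw : y ≠ w := by
    rintro rfl
    rw [hM.rank_eq (Sym2.eq_swap ▸ hyz)] at hz
    exact hz.false
  have hyz' : y ≠ z := (hM.adj hyz).ne
  obtain ⟨x', hx'⟩ := hM.exists_forall_partner_eq x
  obtain ⟨w', hw'⟩ := hM.exists_forall_partner_eq w
  have hA : IsMatching G {s(x, y), s(z, w)} := by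
    refine (isMatching_singleton hzw).insert hxy ?_ ?_ <;>
      simp [hxz, hxw, hyz', hyw]
  have hAX : ∀ e ∈ ({s(x, y), s(z, w)} : Set (Sym2 W)), ∀ v ∈ e,
      v ∈ ({x, y, z, w} : Set W) := by
    simp
  have hwin : 4 ≤ vote G pref (replaceEdges M {x, y, z, w} {s(x, y), s(z, w)}) M := by
    refine (card_le_vote {x, y, z, w} ?_).trans' (Finset.card_eq_four.mpr ?_).ge
    · simp only [Finset.mem_insert, Finset.mem_singleton, forall_eq_or_imp, forall_eq]
      rw [rank_replaceEdges_of_mem hM hA hAX (w := y) (by simp),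
        rank_replaceEdges_of_mem hM hA hAX (w := x) (by simp),
        rank_replaceEdges_of_mem hM hA hAX (w := w) (by simp),
        rank_replaceEdges_of_mem hM hA hAX (w := z) (by simp)]
      exact ⟨hx, hy, hz, hw⟩
    · exact ⟨x, y, z, w, hxy.ne, hxz, hxw, hyz', hyw, hzw.ne, rfl⟩
  have := hpop.two_mul_vote_replaceEdges_le hA hAX (Y := {x, y, z, w, x', w'})
    (by simp [Set.insert_subset_iff])
    (by
      simp only [Set.mem_insert_iff, Set.mem_singleton_iff, forall_eq_or_imp, forall_eq]
      refine ⟨fun v hv => ?_, fun v hv => ?_, fun v hv => ?_, fun v hv => ?_⟩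
      · simp [hx' v hv]
      · simp [hM.eq_of_mem hv hyz]
      · simp [hM.eq_of_mem_swap hv hyz]
      · simp [hw' v hv])
  have := Finset.card_le_six (a := x) (b := y) (c := z) (d := w) (e := x') (f := w')
  omega

end PopularMatching

instance {V : Type*} [Finite V] : Finite (Gad V) := by
  refine Finite.of_injective (β := Fin 6 × V × V) (fun g => match g with
    | .a i => (0, i, i) | .b i => (1, i, i) | .c i => (2, i, i)
    | .d i => (3, i, i) | .u i j => (4, i, j) | .f i j => (5, i, j)) ?_
  intro g g' h
  cases g <;> cases g' <;> simp_all

namespace Reduction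

variable {V : Type u} [LinearOrder V] (R : Reduction V) {M : Set (Sym2 R.HV)}

instance : Finite R.HV :=
  haveI := R.ispvc.1
  inferInstance

lemma adj_ab (i : V) : R.H.Adj (R.va i) (R.vb i) :=
  ⟨by simp [va, vb, Subtype.ext_iff], Or.inl (.ab i)⟩

lemma adj_ac (i : V) : R.H.Adj (R.va i) (R.vc i) :=
  ⟨by simp [va, vc, Subtype.ext_iff], Or.inl (.ac i)⟩

lemma adj_bu {i j : V} (h : R.G.Adj i j) : R.H.Adj (R.vb i) (R.vu i j h) :=
  ⟨by simp [vb, vu, Subtype.ext_iff], Or.inl (.bu h)⟩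

lemma adj_uu {i j : V} (h : R.G.Adj i j) : R.H.Adj (R.vu i j h) (R.vu j i h.symm) :=
  ⟨by simp [vu, h.ne, Subtype.ext_iff], Or.inl (.uu h)⟩

lemma eq_of_adj_va {i : V} {x : R.HV} (h : R.H.Adj (R.va i) x) :
    x = R.vb i ∨ x = R.vc i ∨ x = R.vd i := by
  obtain ⟨g, hg⟩ := x
  obtain ⟨-, hx | hx⟩ := h
  · cases hx
    exacts [Or.inl rfl, Or.inr (Or.inl rfl)]
  · cases hx
    exact Or.inr (Or.inr rfl)

lemma eq_of_adj_vb {i : V} {x : R.HV} (h : R.H.Adj (R.vb i) x) :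
    x = R.va i ∨ x = R.vc i ∨ ∃ (j : V) (hj : R.G.Adj i j), x = R.vu i j hj := by
  obtain ⟨g, hg⟩ := x
  obtain ⟨-, hx | hx⟩ := h
  · cases hx with
    | bc => exact Or.inr (Or.inl rfl)
    | bu hj => exact Or.inr (Or.inr ⟨_, hj, rfl⟩)
  · cases hx
    exact Or.inl rfl

lemma eq_of_adj_vu {i j : V} {hij : R.G.Adj i j} {x : R.HV} (h : R.H.Adj (R.vu i j hij) x) :
    x = R.vu j i hij.symm ∨ x = R.vb i := by
  obtain ⟨g, hg⟩ := x
  obtain ⟨-, hx | hx⟩ := h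
  · cases hx
    exact Or.inl rfl
  · cases hx
    exacts [Or.inl rfl, Or.inr rfl]

lemma prefH_ab (i : V) : R.prefH (R.va i) (R.vb i) = 1 := R.pref_ab i
lemma prefH_ac (i : V) : R.prefH (R.va i) (R.vc i) = 2 := R.pref_ac i
lemma prefH_ad (i : V) : R.prefH (R.va i) (R.vd i) = 3 := R.pref_ad i
lemma prefH_ba (i : V) : R.prefH (R.vb i) (R.va i) = 1 := R.pref_ba i
lemma prefH_bc (i : V) : R.prefH (R.vb i) (R.vc i) = (R.G.neighborSet i).ncard + 2 :=
  R.pref_bc i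
lemma prefH_bu_mem {i j : V} (h : R.G.Adj i j) :
    R.prefH (R.vb i) (R.vu i j h) ∈ Set.Icc 2 ((R.G.neighborSet i).ncard + 1) :=
  (R.pref_bu i).mapsTo ⟨j, h, rfl⟩
lemma prefH_ca (i : V) : R.prefH (R.vc i) (R.va i) = 1 := R.pref_ca i
lemma prefH_cb (i : V) : R.prefH (R.vc i) (R.vb i) = 2 := R.pref_cb i
lemma prefH_uu {i j : V} (h : R.G.Adj i j) : R.prefH (R.vu i j h) (R.vu j i h.symm) = 1 :=
  R.pref_uu i j h
lemma prefH_ub {i j : V} (h : R.G.Adj i j) : R.prefH (R.vu i j h) (R.vb i) = 2 :=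
  R.pref_ub i j h

variable {R}

lemma one_lt_rank_va (hM : IsMatching R.H M) {i : V} (hab : s(R.va i, R.vb i) ∉ M) :
    1 < rank R.H R.prefH M (R.va i) := by
  refine one_lt_rank hM (R.adj_ab i) fun x hx => ?_
  rcases R.eq_of_adj_va (hM.adj hx) with rfl | rfl | rfl
  · exact absurd hx hab
  · rw [prefH_ac]; omega
  · rw [prefH_ad]; omega

lemma one_lt_rank_vb (hM : IsMatching R.H M) {i : V} (hab : s(R.va i, R.vb i) ∉ M) :
    1 < rank R.H R.prefH M (R.vb i) := by
  refine one_lt_rank hM (R.adj_ab i).symm fun x hx => ?_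
  rcases R.eq_of_adj_vb (hM.adj hx) with rfl | rfl | ⟨j, hj, rfl⟩
  · exact absurd (Sym2.eq_swap ▸ hx) hab
  · rw [prefH_bc]; omega
  · have := (R.prefH_bu_mem hj).1; omega

lemma one_lt_rank_vu (hM : IsMatching R.H M) {i j : V} {hij : R.G.Adj i j}
    (huu : s(R.vu i j hij, R.vu j i hij.symm) ∉ M) : 1 < rank R.H R.prefH M (R.vu i j hij) := by
  refine one_lt_rank hM (R.adj_uu hij) fun x hx => ?_
  rcases R.eq_of_adj_vu (hM.adj hx) with rfl | rfl
  · exact absurd hx huu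
  · rw [prefH_ub]; omega

/-- Both endpoints of `{a_i, b_i}` prefer it, so both are matched, and `b_i` cannot be matched
to some `u^e_i`, since `{u^e_i, u^e_j}` would be a second such edge next to it. -/
lemma mem_ad_and_mem_bc (hpop : IsPopular R.H R.prefH M) {i : V}
    (hab : s(R.va i, R.vb i) ∉ M) : s(R.va i, R.vd i) ∈ M ∧ s(R.vb i, R.vc i) ∈ M := by
  have hM := hpop.1
  have ha : R.prefH (R.va i) (R.vb i) < rank R.H R.prefH M (R.va i) := by
    rw [prefH_ab]; exact one_lt_rank_va hM hab
  have hb : R.prefH (R.vb i) (R.va i) < rank R.H R.prefH M (R.vb i) := by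
    rw [prefH_ba]; exact one_lt_rank_vb hM hab
  have hbc : s(R.vb i, R.vc i) ∈ M := by
    obtain ⟨x, hx⟩ := hpop.matched_of_lt_rank (R.adj_ab i).symm hb ha
    rcases R.eq_of_adj_vb (hM.adj hx) with rfl | rfl | ⟨j, hij, rfl⟩
    · exact absurd (Sym2.eq_swap ▸ hx) hab
    · exact hx
    · have hu : R.prefH (R.vu i j hij) (R.vu j i hij.symm) <
          rank R.H R.prefH M (R.vu i j hij) := by
        rw [prefH_uu, hM.rank_eq (Sym2.eq_swap ▸ hx), prefH_ub]; omega
      have hu' : R.prefH (R.vu j i hij.symm) (R.vu i j hij) <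
          rank R.H R.prefH M (R.vu j i hij.symm) := by
        refine (R.prefH_uu hij.symm).trans_lt (one_lt_rank_vu hM fun h => ?_)
        have := hM.eq_of_mem (Sym2.eq_swap ▸ h) (Sym2.eq_swap ▸ hx)
        simp [vu, vb, Subtype.ext_iff] at this
      exact (hpop.false_of_lt_rank_of_lt_rank (R.adj_ab i) (R.adj_uu hij) hx
        (by simp [va, vu, Subtype.ext_iff]) ha hb hu hu').elim
  refine ⟨?_, hbc⟩
  obtain ⟨x, hx⟩ := hpop.matched_of_lt_rank (R.adj_ab i) ha hb
  rcases R.eq_of_adj_va (hM.adj hx) with rfl | rfl | rfl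
  · exact absurd hx hab
  · have := hM.eq_of_mem (Sym2.eq_swap ▸ hx) (Sym2.eq_swap ▸ hbc)
    simp [va, vb, Subtype.ext_iff] at this
  · exact hx

/-- Otherwise `u^e_i` and `u^e_j` would both be unmatched, although each is the other's
first choice. -/
lemma mem_uu (hpop : IsPopular R.H R.prefH M) {i j : V} (hij : R.G.Adj i j)
    (hbci : s(R.vb i, R.vc i) ∈ M) : s(R.vu i j hij, R.vu j i hij.symm) ∈ M := by
  have hM := hpop.1
  by_contra huu
  have hu := (R.prefH_uu hij).trans_lt (one_lt_rank_vu hM huu)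
  have hu' := (R.prefH_uu hij.symm).trans_lt (one_lt_rank_vu hM (Sym2.eq_swap ▸ huu))
  obtain ⟨x, hx⟩ := hpop.matched_of_lt_rank (R.adj_uu hij) hu hu'
  rcases R.eq_of_adj_vu (hM.adj hx) with rfl | rfl
  · exact huu hx
  · have := hM.eq_of_mem (Sym2.eq_swap ▸ hx) hbci
    simp [vu, vc, Subtype.ext_iff] at this

/-- Rematching along the alternating path `d_i a_i c_i b_i u^e_i u^e_j b_j c_j a_j d_j` makes
`a_i, b_i, c_i, a_j, b_j, c_j` better off and only its four other vertices worse off. -/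
lemma not_isPopular_of_mem_ad_bc_uu {i j : V} (hij : R.G.Adj i j) (hdi : s(R.va i, R.vd i) ∈ M)
    (hbci : s(R.vb i, R.vc i) ∈ M) (hdj : s(R.va j, R.vd j) ∈ M)
    (hbcj : s(R.vb j, R.vc j) ∈ M) (huu : s(R.vu i j hij, R.vu j i hij.symm) ∈ M) :
    ¬ IsPopular R.H R.prefH M := by
  intro hpop
  have hM := hpop.1
  have hne := hij.ne
  set ui := R.vu i j hij
  set uj := R.vu j i hij.symm
  set Y : Finset R.HV :=
    [R.va i, R.vb i, R.vc i, R.vd i, R.va j, R.vb j, R.vc j, R.vd j, ui, uj].toFinset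
  set A : Set (Sym2 R.HV) :=
    {s(R.va i, R.vc i), s(R.vb i, ui), s(R.vb j, uj), s(R.va j, R.vc j)}
  have hA : IsMatching R.H A := by
    refine (((isMatching_singleton (R.adj_ac j)).insert (R.adj_bu hij.symm) ?_ ?_).insert
      (R.adj_bu hij) ?_ ?_).insert (R.adj_ac i) ?_ ?_ <;>
    simp [va, vb, vc, vu, Subtype.ext_iff, hne, hne.symm]
  have hAX : ∀ e ∈ A, ∀ v ∈ e, v ∈ (Y : Set R.HV) := by
    intro e he v hv
    simp only [A, Set.mem_insert_iff, Set.mem_singleton_iff] at he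
    rcases he with rfl | rfl | rfl | rfl <;> rcases Sym2.mem_iff.mp hv with rfl | rfl <;>
      simp [Y]
  have hwin : ∀ v w w', s(v, w) ∈ A → s(v, w') ∈ M → R.prefH v w < R.prefH v w' →
      rank R.H R.prefH (replaceEdges M Y A) v < rank R.H R.prefH M v := by
    intro v w w' hw hw' hlt
    rwa [rank_replaceEdges_of_mem hM hA hAX hw, hM.rank_eq hw']
  have hui : R.prefH (R.vb i) ui ≤ _ := (R.prefH_bu_mem hij).2
  have huj : R.prefH (R.vb j) uj ≤ _ := (R.prefH_bu_mem hij.symm).2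
  set S := [R.va i, R.vb i, R.vc i, R.va j, R.vb j, R.vc j]
  have hvote : 6 ≤ vote R.H R.prefH (replaceEdges M Y A) M := by
    refine (card_le_vote S.toFinset ?_).trans' (List.toFinset_card_of_nodup (l := S) ?_).ge
    · simp only [S, List.mem_toFinset, List.mem_cons, List.not_mem_nil, or_false,
        forall_eq_or_imp, forall_eq]
      refine ⟨hwin _ (R.vc i) _ (by simp [A]) hdi ?_, hwin _ ui _ (by simp [A]) hbci ?_,
        hwin _ (R.va i) _ (by simp [A]) (Sym2.eq_swap ▸ hbci) ?_,
        hwin _ (R.vc j) _ (by simp [A]) hdj ?_, hwin _ uj _ (by simp [A]) hbcj ?_,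
        hwin _ (R.va j) _ (by simp [A]) (Sym2.eq_swap ▸ hbcj) ?_⟩ <;>
      simp only [prefH_ac, prefH_ad, prefH_bc, prefH_ca, prefH_cb] <;> omega
    · simp [S, va, vb, vc, Subtype.ext_iff, hne]
  have hclosed : ∀ w ∈ (Y : Set R.HV), ∀ v, s(w, v) ∈ M → v ∈ Y := by
    intro w hw v hv
    simp only [Y, List.coe_toFinset, List.mem_cons, List.not_mem_nil, or_false,
      Set.mem_ofPred_eq] at hw
    rcases hw with rfl | rfl | rfl | rfl | rfl | rfl | rfl | rfl | rfl | rfl <;>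
    first
    | rw [hM.eq_of_mem hv hdi] | rw [hM.eq_of_mem_swap hv hdi]
    | rw [hM.eq_of_mem hv hbci] | rw [hM.eq_of_mem_swap hv hbci]
    | rw [hM.eq_of_mem hv hdj] | rw [hM.eq_of_mem_swap hv hdj]
    | rw [hM.eq_of_mem hv hbcj] | rw [hM.eq_of_mem_swap hv hbcj]
    | rw [hM.eq_of_mem hv huu] | rw [hM.eq_of_mem_swap hv huu]
    all_goals simp [Y]
  have hY : Y.card ≤ 10 := List.toFinset_card_le _
  have := hpop.two_mul_vote_replaceEdges_le hA hAX subset_rfl hclosed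
  omega

end Reduction

/-- If `M` is a popular matching in `H`, then `U = {i : {a_i, b_i} ∈ M}` is a vertex
cover of `G`. -/
theorem popular_gives_vertex_cover {V : Type u} [LinearOrder V] (R : Reduction V)
    (M : Set (Sym2 R.HV)) (hM : IsPopular R.H R.prefH M) :
    IsVC R.G {i : V | s(R.va i, R.vb i) ∈ M} := by
  intro i j hij
  by_contra! hU
  obtain ⟨hdi, hbci⟩ := Reduction.mem_ad_and_mem_bc hM hU.1
  obtain ⟨hdj, hbcj⟩ := Reduction.mem_ad_and_mem_bc hM hU.2
  exact Reduction.not_isPopular_of_mem_ad_bc_uu hij hdi hbci hdj hbcj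
    (Reduction.mem_uu hM hij hbci) hM
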